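/- Let λ ∈ ℂ with λ ≠ 0 and λ ≠ −1, fix a value of log(−λ), and set u = log(−λ)/2 (which is neither 0 nor a zero of 𝕀_{1/2}). Then for every n ≥ 0 and every x ∈ ℂ, 𝔈_{n,−1/2,u}(2x−1)/(2^{n−1}(λ+1)) = 𝓔ₙ(x;λ), where 𝓔ₙ(x;λ) is the n-th Apostol–Euler polynomial defined by the generating function 2e^{xt}/(λe^t+1) = ∑_{n=0}^∞ 𝓔ₙ(x;λ) tⁿ/n!. -/

import Mathlib

open Complex Polynomial Finset Filter Topology

/-- `γ_{n,α}` from the Dunkl setting: `γ_{2k,α} = 2^{2k} k! (α+1)_k`,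
`γ_{2k+1,α} = 2^{2k+1} k! (α+1)_{k+1}`. -/
noncomputable def gamDunkl (α : ℂ) (n : ℕ) : ℂ :=
  if n % 2 = 0 then
    (2:ℂ)^n * (Nat.factorial (n/2) : ℂ) * (ascPochhammer ℂ (n/2)).eval (α+1)
  else
    (2:ℂ)^n * (Nat.factorial (n/2) : ℂ) * (ascPochhammer ℂ (n/2+1)).eval (α+1)

/-- `𝕀_α(z) = Γ(α+1) ∑_{n≥0} (z/2)^{2n} / (n! Γ(n+α+1))`. -/
noncomputable def modI (α z : ℂ) : ℂ :=
  Complex.Gamma (α+1) *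
    ∑' n : ℕ, (z/2)^(2*n) / ((Nat.factorial n : ℂ) * Complex.Gamma ((n:ℂ) + α + 1))

/-- The Dunkl kernel `E_α(z) = 𝕀_α(z) + (z/(2(α+1))) 𝕀_{α+1}(z)`. -/
noncomputable def dunklKer (α z : ℂ) : ℂ :=
  modI α z + z / (2*(α+1)) * modI (α+1) z

/-! At `α = -1/2` everything is elementary: `γ_{n,-1/2} = n!` because `(1/2)_k 4^k k! = (2k)!`,
`𝕀_{-1/2} = cosh`, `z 𝕀_{1/2}(z) = sinh z`, hence `E_{-1/2} = exp`. The Dunkl generating function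
becomes `sinh u · e^{(2x-1)t} / sinh (t + u)`, which for `e^{2u} = -λ` equals
`(λ+1) e^{2xt} / (λ e^{2t} + 1)`, that is `(λ+1)/2` times the Apostol–Euler generating function
at `2t`. Comparing Taylor coefficients gives `𝔈_n(2x-1) = (λ+1) 2^{n-1} 𝓔_n(x;λ)`. -/

open scoped Nat

theorem coeff_eq_of_eventually_hasSum_pow {𝕜 : Type*} [NontriviallyNormedField 𝕜]
    {c d : ℕ → 𝕜} {f : 𝕜 → 𝕜}
    (hc : ∀ᶠ t in 𝓝 0, HasSum (fun n => c n * t ^ n) (f t))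
    (hd : ∀ᶠ t in 𝓝 0, HasSum (fun n => d n * t ^ n) (f t)) : c = d := by
  have hasFPowerSeries {a : ℕ → 𝕜} (ha : ∀ᶠ t in 𝓝 0, HasSum (fun n => a n * t ^ n) (f t)) :
      HasFPowerSeriesAt f (FormalMultilinearSeries.ofScalars 𝕜 a) 0 := by
    rw [hasFPowerSeriesAt_iff]
    simpa only [FormalMultilinearSeries.coeff_ofScalars, smul_eq_mul, mul_comm, zero_add] using ha
  exact FormalMultilinearSeries.ofScalars_series_injective 𝕜 (E := 𝕜)
    ((hasFPowerSeries hc).eq_formalMultilinearSeries (hasFPowerSeries hd))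

theorem ascPochhammer_succ_eval_left {S : Type*} [CommSemiring S] (n : ℕ) (a : S) :
    (ascPochhammer S (n + 1)).eval a = a * (ascPochhammer S n).eval (a + 1) := by
  rw [ascPochhammer_succ_left, eval_mul, eval_X, eval_comp, eval_add, eval_X, eval_one]

theorem gamDunkl_two_mul (α : ℂ) (k : ℕ) :
    gamDunkl α (2 * k) = 2 ^ (2 * k) * k ! * (ascPochhammer ℂ k).eval (α + 1) := by
  simp [gamDunkl]

theorem gamDunkl_two_mul_add_one (α : ℂ) (k : ℕ) :
    gamDunkl α (2 * k + 1) = 2 ^ (2 * k + 1) * k ! * (ascPochhammer ℂ (k + 1)).eval (α + 1) := by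
  simp [gamDunkl, Nat.add_mod, show (2 * k + 1) / 2 = k by omega]

theorem modI_eq_tsum {α : ℂ} (hα : ∀ k : ℕ, α + 1 ≠ -k) (z : ℂ) :
    modI α z = ∑' n : ℕ, (z / 2) ^ (2 * n) / (n ! * (ascPochhammer ℂ n).eval (α + 1)) := by
  rw [modI, ← tsum_mul_left]
  refine tsum_congr fun n => ?_
  have hΓ0 := Complex.Gamma_ne_zero hα
  have hΓ : Complex.Gamma (n + α + 1)
      = Complex.Gamma (α + 1) * (ascPochhammer ℂ n).eval (α + 1) := by
    rw [← Complex.Gamma_add_nat_div_Gamma_eq _ hα, mul_div_cancel₀ _ hΓ0]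
    ring_nf
  rw [hΓ, mul_left_comm (n ! : ℂ), ← mul_div_assoc, mul_div_mul_left _ _ hΓ0]

theorem modI_eq_tsum_even {α : ℂ} (hα : ∀ k : ℕ, α + 1 ≠ -k) (z : ℂ) :
    modI α z = ∑' n : ℕ, z ^ (2 * n) / gamDunkl α (2 * n) := by
  rw [modI_eq_tsum hα]
  refine tsum_congr fun n => ?_
  rw [gamDunkl_two_mul, div_pow, div_div, mul_assoc]

theorem div_mul_modI_add_one_eq_tsum_odd {α : ℂ} (hα : ∀ k : ℕ, α + 1 ≠ -k) (z : ℂ) :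
    z / (2 * (α + 1)) * modI (α + 1) z = ∑' n : ℕ, z ^ (2 * n + 1) / gamDunkl α (2 * n + 1) := by
  have hα' : ∀ k : ℕ, α + 1 + 1 ≠ -k := fun k h =>
    hα (k + 1) (by push_cast; linear_combination h)
  have hα0 : α + 1 ≠ 0 := by simpa using hα 0
  rw [modI_eq_tsum hα', ← tsum_mul_left]
  refine tsum_congr fun n => ?_
  rw [gamDunkl_two_mul_add_one, ascPochhammer_succ_eval_left, div_pow]
  field_simp
  ring

theorem ascPochhammer_eval_half_mul (k : ℕ) :
    (ascPochhammer ℂ k).eval (1 / 2) * (2 ^ (2 * k) * k !) = (2 * k)! := by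
  induction k with
  | zero => simp
  | succ k ih =>
    rw [ascPochhammer_succ_eval, show 2 * (k + 1) = 2 * k + 1 + 1 by ring, Nat.factorial_succ,
      Nat.factorial_succ, Nat.factorial_succ]
    push_cast
    linear_combination (2 * (k : ℂ) + 1) * (2 * k + 2) * ih

theorem gamDunkl_neg_half (n : ℕ) : gamDunkl (-1 / 2) n = n ! := by
  have half : (-1 / 2 : ℂ) + 1 = 1 / 2 := by norm_num
  obtain ⟨k, rfl | rfl⟩ := Nat.even_or_odd' n
  · rw [gamDunkl_two_mul, half, ← ascPochhammer_eval_half_mul]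
    ring
  · rw [gamDunkl_two_mul_add_one, half, Nat.factorial_succ, ascPochhammer_succ_eval]
    push_cast
    linear_combination (2 * (k : ℂ) + 1) * ascPochhammer_eval_half_mul k

theorem neg_half_add_one_ne_neg_natCast (k : ℕ) : (-1 / 2 : ℂ) + 1 ≠ -k := fun h => by
  have := congrArg Complex.re h
  norm_num at this
  linarith [(k.cast_nonneg : (0 : ℝ) ≤ k)]

theorem modI_neg_half (z : ℂ) : modI (-1 / 2) z = Complex.cosh z := by
  simp only [modI_eq_tsum_even neg_half_add_one_ne_neg_natCast, gamDunkl_neg_half,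
    Complex.cosh_eq_tsum]

theorem mul_modI_half (z : ℂ) : z * modI ((-1 / 2 : ℂ) + 1) z = Complex.sinh z := by
  have h := div_mul_modI_add_one_eq_tsum_odd neg_half_add_one_ne_neg_natCast z
  rw [show 2 * ((-1 / 2 : ℂ) + 1) = 1 by norm_num, div_one] at h
  simp only [h, gamDunkl_neg_half, Complex.sinh_eq_tsum]

theorem dunklKer_neg_half (z : ℂ) : dunklKer (-1 / 2) z = Complex.exp z := by
  rw [dunklKer, modI_neg_half, show 2 * ((-1 / 2 : ℂ) + 1) = 1 by norm_num, div_one,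
    mul_modI_half, Complex.cosh_add_sinh]

theorem two_mul_sinh_eq (z : ℂ) :
    2 * Complex.sinh z = Complex.exp (-z) * (Complex.exp (2 * z) - 1) := by
  rw [Complex.two_sinh, mul_sub, ← Complex.exp_add, mul_one]
  ring_nf

/-- No condition on `t` is needed: `sinh (t + u) = 0` exactly when `λ e^{2t} + 1 = 0`, and then
both sides are `0` by the convention `a / 0 = 0`. -/
theorem sinh_mul_exp_div_sinh_add {lam u : ℂ} (hu : Complex.exp (2 * u) = -lam) (x t : ℂ) :
    Complex.sinh u * Complex.exp ((2 * x - 1) * t) / Complex.sinh (t + u)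
      = (lam + 1) * Complex.exp (x * (2 * t)) / (lam * Complex.exp (2 * t) + 1) := by
  have hnum : 2 * Complex.sinh u * Complex.exp ((2 * x - 1) * t)
      = Complex.exp (-(t + u)) * (-(lam + 1) * Complex.exp (x * (2 * t))) := by
    have hexp : Complex.exp (-u) * Complex.exp ((2 * x - 1) * t)
        = Complex.exp (-(t + u)) * Complex.exp (x * (2 * t)) := by
      rw [← Complex.exp_add, ← Complex.exp_add]
      ring_nf
    rw [two_mul_sinh_eq, hu]
    linear_combination (-lam - 1) * hexp
  have hden : 2 * Complex.sinh (t + u)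
      = Complex.exp (-(t + u)) * -(lam * Complex.exp (2 * t) + 1) := by
    rw [two_mul_sinh_eq, mul_add, Complex.exp_add, hu]
    ring
  calc Complex.sinh u * Complex.exp ((2 * x - 1) * t) / Complex.sinh (t + u)
      = 2 * Complex.sinh u * Complex.exp ((2 * x - 1) * t) / (2 * Complex.sinh (t + u)) := by
        rw [mul_assoc, mul_div_mul_left _ _ two_ne_zero]
    _ = _ := by
        rw [hnum, hden, mul_div_mul_left _ _ (Complex.exp_ne_zero _), neg_mul, neg_div_neg_eq]

theorem apostolEulerDunkl_neg_half_eq_apostolEuler_general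
    (lam : ℂ) (hlam1 : lam ≠ -1)
    (u : ℂ) (hu : Complex.exp (2*u) = -lam)
    (E : ℕ → Polynomial ℂ)
    (hE : ∀ x : ℂ, ∃ r > 0, ∀ t : ℂ, ‖t‖ < r →
      HasSum (fun n : ℕ => (E n).eval x * t^n / gamDunkl (-1/2) n)
        (u * modI ((-1/2 : ℂ)+1) u * dunklKer (-1/2) (x*t)
          / ((t+u) * modI ((-1/2 : ℂ)+1) (t+u))))
    (AE : ℕ → Polynomial ℂ)
    (hAE : ∀ x : ℂ, ∃ r > 0, ∀ t : ℂ, ‖t‖ < r →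
      HasSum (fun n : ℕ => (AE n).eval x * t^n / (Nat.factorial n : ℂ))
        (2 * Complex.exp (x*t) / (lam * Complex.exp t + 1))) :
    ∀ n : ℕ, ∀ x : ℂ,
      (E n).eval (2*x - 1) / ((2:ℂ)^((n:ℤ) - 1) * (lam + 1)) = (AE n).eval x := by
  intro n x
  obtain ⟨r₁, hr₁, hE⟩ := hE (2 * x - 1)
  obtain ⟨r₂, hr₂, hAE⟩ := hAE x
  have hDunkl : ∀ᶠ t in 𝓝 (0 : ℂ), HasSum (fun m => (E m).eval (2 * x - 1) / m ! * t ^ m)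
      ((lam + 1) * Complex.exp (x * (2 * t)) / (lam * Complex.exp (2 * t) + 1)) := by
    filter_upwards [Metric.ball_mem_nhds 0 hr₁] with t ht
    have h := hE t (by simpa using ht)
    rw [mul_modI_half, mul_modI_half, dunklKer_neg_half, sinh_mul_exp_div_sinh_add hu] at h
    simpa only [gamDunkl_neg_half, div_mul_eq_mul_div] using h
  have hApostol : ∀ᶠ t in 𝓝 (0 : ℂ),
      HasSum (fun m => (lam + 1) / 2 * (AE m).eval x * 2 ^ m / m ! * t ^ m)
        ((lam + 1) * Complex.exp (x * (2 * t)) / (lam * Complex.exp (2 * t) + 1)) := by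
    have h2 : Tendsto (fun t : ℂ => 2 * t) (𝓝 0) (𝓝 0) := by
      simpa using (continuous_const_mul (2 : ℂ)).tendsto 0
    filter_upwards [h2.eventually (Metric.ball_mem_nhds 0 hr₂)] with t ht
    have h := (hAE (2 * t) (by simpa using ht)).mul_left ((lam + 1) / 2)
    rw [mul_div_assoc', ← mul_assoc, div_mul_cancel₀ _ two_ne_zero] at h
    exact h.congr_fun fun m => by rw [mul_pow]; ring
  have hcoeff := congrFun (coeff_eq_of_eventually_hasSum_pow hDunkl hApostol) n
  rw [div_left_inj' (Nat.cast_ne_zero.mpr n.factorial_ne_zero)] at hcoeff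
  have hlam : lam + 1 ≠ 0 := fun h => hlam1 (eq_neg_of_add_eq_zero_left h)
  rw [hcoeff, zpow_sub₀ two_ne_zero, zpow_one, zpow_natCast]
  field_simp

/-- **Apostol–Euler–Dunkl polynomials at `α = -1/2` are rescaled Apostol–Euler polynomials:**
let `λ ≠ 0, -1`, fix a logarithm `u` of `-λ` divided by two (i.e. `e^{2u} = -λ`), let `(E n)` be
the Apostol–Euler–Dunkl polynomials of parameters `α = -1/2` and `u`, and let `(AE n)` be the
Apostol–Euler polynomials, defined by `2e^{xt}/(λe^t+1) = ∑ 𝓔ₙ(x;λ) tⁿ/n!` near `t = 0`. Then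
`𝔈_{n,-1/2,u}(2x-1)/(2^{n-1}(λ+1)) = 𝓔ₙ(x;λ)`. -/
theorem apostolEulerDunkl_neg_half_eq_apostolEuler
    (lam : ℂ) (hlam0 : lam ≠ 0) (hlam1 : lam ≠ -1)
    (u : ℂ) (hu : Complex.exp (2*u) = -lam)
    (E : ℕ → Polynomial ℂ)
    (hE : ∀ x : ℂ, ∃ r > 0, ∀ t : ℂ, ‖t‖ < r →
      HasSum (fun n : ℕ => (E n).eval x * t^n / gamDunkl (-1/2) n)
        (u * modI ((-1/2 : ℂ)+1) u * dunklKer (-1/2) (x*t)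
          / ((t+u) * modI ((-1/2 : ℂ)+1) (t+u))))
    (AE : ℕ → Polynomial ℂ)
    (hAE : ∀ x : ℂ, ∃ r > 0, ∀ t : ℂ, ‖t‖ < r →
      HasSum (fun n : ℕ => (AE n).eval x * t^n / (Nat.factorial n : ℂ))
        (2 * Complex.exp (x*t) / (lam * Complex.exp t + 1))) :
    ∀ n : ℕ, ∀ x : ℂ,
      (E n).eval (2*x - 1) / ((2:ℂ)^((n:ℤ) - 1) * (lam + 1)) = (AE n).eval x :=
  apostolEulerDunkl_neg_half_eq_apostolEuler_general lam hlam1 u hu E hE AE hAE
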